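/- For every real constant a ≥ 1 there exists a constant ε > 0 such that the following holds for every integer P ≥ 2: if w_1, …, w_m are nonnegative real weights with total W = Σ_{i=1}^m w_i > 0 and w_i ≤ ε·W/(P·ln P) for every i, and each ball i is placed into one of P bins independently and uniformly at random, then with probability at least 1 − P^{−a}, every bin receives total weight at least W/(2P) and at most 2W/P. -/

import Mathlib

/-!
Chernoff bound, computed by counting. For a fixed bin `b`, the sum over all placements of
`exp (t * load b)` factorises over the balls into `∏ i, (P - 1 + exp (t * w i))`. When every
weight is at most `c` and `|t| * c ≤ 1`, the estimate `exp y ≤ 1 + y + y ^ 2` on `|y| ≤ 1` bounds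
each factor by `P * exp ((t + t ^ 2 * c) * w i / P)`, so Markov's inequality bounds the number
of placements with `t * load b ≥ u` by `P ^ m * exp ((t + t ^ 2 * c) * W / P - u)`. Taking
`t = ± 1 / (4 * c)` makes both tails `{load b > 2 W / P}` and `{load b < W / (2 P)}` at most
a fraction `exp (-W / (16 P c))` of all placements. With `c = ε W / (P ln P)` and
`ε = 1 / (16 (a + 2))` this fraction is `P ^ (-(a + 2))`, and a union bound over the `2 P` tail
events leaves failure probability at most `2 P ^ (-(a + 1)) ≤ P ^ (-a)`.
-/

open Finset Real

theorem card_filter_le_exp_neg_mul_sum_exp {α : Type*} (s : Finset α) (g : α → ℝ) (u : ℝ) :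
    (#(s.filter fun x => u ≤ g x) : ℝ) ≤ exp (-u) * ∑ x ∈ s, exp (g x) := by
  rw [mul_sum, card_eq_sum_ones, Nat.cast_sum, Nat.cast_one]
  calc ∑ x ∈ s.filter fun x => u ≤ g x, (1 : ℝ)
      ≤ ∑ x ∈ s.filter fun x => u ≤ g x, exp (-u) * exp (g x) :=
        sum_le_sum fun x hx => by
          rw [← exp_add]
          exact one_le_exp (by linarith [(mem_filter.1 hx).2])
    _ ≤ ∑ x ∈ s, exp (-u) * exp (g x) :=
        sum_le_sum_of_subset_of_nonneg (filter_subset _ _) fun _ _ _ => by positivity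

theorem exp_le_one_add_add_sq {x : ℝ} (hx : |x| ≤ 1) : exp x ≤ 1 + x + x ^ 2 := by
  linarith [(abs_le.1 (abs_exp_sub_one_sub_id_le hx)).2]

theorem sub_one_add_exp_le_mul_exp {n y : ℝ} (hn : 1 ≤ n) (hy : |y| ≤ 1) :
    n - 1 + exp y ≤ n * exp ((y + y ^ 2) / n) :=
  calc n - 1 + exp y ≤ n * (1 + (y + y ^ 2) / n) := by
        rw [mul_add, mul_div_cancel₀ _ (by positivity)]
        linarith [exp_le_one_add_add_sq hy]
    _ ≤ n * exp ((y + y ^ 2) / n) := by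
        gcongr
        linarith [add_one_le_exp ((y + y ^ 2) / n)]

section BinLoad

variable {ι β : Type*} [Fintype ι] [DecidableEq β]

def binLoad (w : ι → ℝ) (f : ι → β) (b : β) : ℝ :=
  ∑ i ∈ univ.filter (fun i => f i = b), w i

variable [DecidableEq ι] [Fintype β]

theorem sum_exp_mul_binLoad (w : ι → ℝ) (b : β) (t : ℝ) :
    ∑ f : ι → β, exp (t * binLoad w f b) = ∏ i, (Fintype.card β - 1 + exp (t * w i)) := by
  have hfactor : ∀ f : ι → β,
      exp (t * binLoad w f b) = ∏ i, exp (t * if f i = b then w i else 0) := by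
    intro f
    rw [← exp_sum, ← mul_sum, binLoad, sum_filter]
  rw [sum_congr rfl fun f _ => hfactor f,
    ← Fintype.prod_sum fun i (k : β) => exp (t * if k = b then w i else 0)]
  refine prod_congr rfl fun i _ => ?_
  have hrest : ∑ k ∈ {b}ᶜ, exp (t * if k = b then w i else 0) = Fintype.card β - 1 := by
    rw [sum_congr rfl fun k hk => by rw [if_neg (by simpa using hk), mul_zero, exp_zero],
      sum_const, card_compl, card_singleton, nsmul_one,
      Nat.cast_sub (Fintype.card_pos_iff.2 ⟨b⟩), Nat.cast_one]
  rw [Fintype.sum_eq_add_sum_compl b, hrest, if_pos rfl, add_comm]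

theorem card_le_mul_binLoad_le {w : ι → ℝ} {c t : ℝ} (hw : ∀ i, 0 ≤ w i) (hwc : ∀ i, w i ≤ c)
    (htc : |t| * c ≤ 1) (b : β) (u : ℝ) :
    (#(univ.filter fun f : ι → β => u ≤ t * binLoad w f b) : ℝ) ≤
      Fintype.card β ^ Fintype.card ι *
        exp ((t + t ^ 2 * c) * (∑ i, w i) / Fintype.card β - u) := by
  set n : ℝ := (Fintype.card β : ℝ)
  have hn : 1 ≤ n := Nat.one_le_cast.2 (Fintype.card_pos_iff.2 ⟨b⟩)
  have hfactor : ∀ i, n - 1 + exp (t * w i) ≤ n * exp ((t + t ^ 2 * c) * w i / n) := by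
    intro i
    have hsmall : |t * w i| ≤ 1 := by
      rw [abs_mul, abs_of_nonneg (hw i)]
      exact (mul_le_mul_of_nonneg_left (hwc i) (abs_nonneg t)).trans htc
    have hsq : (t * w i) ^ 2 ≤ t ^ 2 * c * w i := by
      rw [mul_pow, sq (w i), ← mul_assoc]
      exact mul_le_mul_of_nonneg_right
        (mul_le_mul_of_nonneg_left (hwc i) (sq_nonneg t)) (hw i)
    calc n - 1 + exp (t * w i) ≤ n * exp ((t * w i + (t * w i) ^ 2) / n) :=
          sub_one_add_exp_le_mul_exp hn hsmall
      _ ≤ n * exp ((t + t ^ 2 * c) * w i / n) := by gcongr; linarith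
  calc (#(univ.filter fun f : ι → β => u ≤ t * binLoad w f b) : ℝ)
      ≤ exp (-u) * ∑ f : ι → β, exp (t * binLoad w f b) :=
        card_filter_le_exp_neg_mul_sum_exp _ _ _
    _ = exp (-u) * ∏ i, (n - 1 + exp (t * w i)) := by rw [sum_exp_mul_binLoad]
    _ ≤ exp (-u) * ∏ i, n * exp ((t + t ^ 2 * c) * w i / n) := by
        gcongr with i
        exact hfactor i
    _ = n ^ Fintype.card ι * exp ((t + t ^ 2 * c) * (∑ i, w i) / n - u) := by
        rw [prod_mul_distrib, prod_const, card_univ, ← exp_sum, ← sum_div, ← mul_sum,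
          sub_eq_add_neg, exp_add]
        ring

theorem card_binLoad_gt_le {w : ι → ℝ} {c : ℝ} (hw : ∀ i, 0 ≤ w i) (hwc : ∀ i, w i ≤ c)
    (hc : 0 < c) (b : β) :
    (#(univ.filter fun f : ι → β => 2 * (∑ i, w i) / Fintype.card β < binLoad w f b) : ℝ) ≤
      Fintype.card β ^ Fintype.card ι * exp (-((∑ i, w i) / (16 * Fintype.card β * c))) := by
  set t := 1 / (4 * c)
  have htc : |t| * c ≤ 1 := by
    rw [abs_of_pos (by positivity)]
    simp only [t]
    field_simp
    norm_num
  have hsub : univ.filter (fun f : ι → β => 2 * (∑ i, w i) / Fintype.card β < binLoad w f b) ⊆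
      univ.filter fun f => t * (2 * (∑ i, w i) / Fintype.card β) ≤ t * binLoad w f b :=
    monotone_filter_right _ fun f _ hf => by gcongr
  calc _ ≤ _ := by exact_mod_cast card_le_card hsub
    _ ≤ _ := card_le_mul_binLoad_le hw hwc htc b _
    _ = Fintype.card β ^ Fintype.card ι *
          exp (-(3 * (∑ i, w i) / (16 * Fintype.card β * c))) := by
        have : (0 : ℝ) < Fintype.card β := Nat.cast_pos.2 (Fintype.card_pos_iff.2 ⟨b⟩)
        congr 2
        simp only [t]
        field_simp
        ring
    _ ≤ _ := by
        have : 0 ≤ ∑ i, w i := sum_nonneg fun i _ => hw i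
        gcongr
        linarith

theorem card_binLoad_lt_le {w : ι → ℝ} {c : ℝ} (hw : ∀ i, 0 ≤ w i) (hwc : ∀ i, w i ≤ c)
    (hc : 0 < c) (b : β) :
    (#(univ.filter fun f : ι → β => binLoad w f b < (∑ i, w i) / (2 * Fintype.card β)) : ℝ) ≤
      Fintype.card β ^ Fintype.card ι * exp (-((∑ i, w i) / (16 * Fintype.card β * c))) := by
  set t := -(1 / (4 * c))
  have htc : |t| * c ≤ 1 := by
    rw [abs_neg, abs_of_pos (by positivity)]
    field_simp
    norm_num
  have hsub : univ.filter (fun f : ι → β => binLoad w f b < (∑ i, w i) / (2 * Fintype.card β)) ⊆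
      univ.filter fun f => t * ((∑ i, w i) / (2 * Fintype.card β)) ≤ t * binLoad w f b :=
    monotone_filter_right _ fun f _ hf => mul_le_mul_of_nonpos_left hf.le (by simp [t]; positivity)
  calc _ ≤ _ := by exact_mod_cast card_le_card hsub
    _ ≤ _ := card_le_mul_binLoad_le hw hwc htc b _
    _ = _ := by
        have : (0 : ℝ) < Fintype.card β := Nat.cast_pos.2 (Fintype.card_pos_iff.2 ⟨b⟩)
        congr 2
        simp only [t]
        field_simp
        push_cast
        ring

theorem card_binLoad_not_bounded_le {w : ι → ℝ} {c : ℝ} (hw : ∀ i, 0 ≤ w i) (hwc : ∀ i, w i ≤ c)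
    (hc : 0 < c) (b : β) :
    (#(univ.filter fun f : ι → β => ¬((∑ i, w i) / (2 * Fintype.card β) ≤ binLoad w f b ∧
        binLoad w f b ≤ 2 * (∑ i, w i) / Fintype.card β)) : ℝ) ≤
      2 * (Fintype.card β ^ Fintype.card ι * exp (-((∑ i, w i) / (16 * Fintype.card β * c)))) := by
  have hsplit : univ.filter (fun f : ι → β => ¬((∑ i, w i) / (2 * Fintype.card β) ≤ binLoad w f b ∧
        binLoad w f b ≤ 2 * (∑ i, w i) / Fintype.card β)) =
      univ.filter (fun f => binLoad w f b < (∑ i, w i) / (2 * Fintype.card β)) ∪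
        univ.filter (fun f => 2 * (∑ i, w i) / Fintype.card β < binLoad w f b) := by
    rw [← filter_or]
    simp only [not_and_or, not_le]
  rw [hsplit]
  have hunion := (Nat.cast_le (α := ℝ)).2 (card_union_le
    (univ.filter (fun f : ι → β => binLoad w f b < (∑ i, w i) / (2 * Fintype.card β)))
    (univ.filter (fun f => 2 * (∑ i, w i) / Fintype.card β < binLoad w f b)))
  push_cast at hunion
  linarith [card_binLoad_lt_le hw hwc hc b, card_binLoad_gt_le hw hwc hc b]

theorem pow_mul_one_sub_le_ncard_binLoad_bounded {w : ι → ℝ} {c : ℝ} (hw : ∀ i, 0 ≤ w i)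
    (hwc : ∀ i, w i ≤ c) (hc : 0 < c) :
    (Fintype.card β : ℝ) ^ Fintype.card ι *
        (1 - 2 * Fintype.card β * exp (-((∑ i, w i) / (16 * Fintype.card β * c)))) ≤
      Set.ncard {f : ι → β | ∀ b, (∑ i, w i) / (2 * Fintype.card β) ≤ binLoad w f b ∧
        binLoad w f b ≤ 2 * (∑ i, w i) / Fintype.card β} := by
  set good : β → (ι → β) → Prop := fun b f => (∑ i, w i) / (2 * Fintype.card β) ≤ binLoad w f b ∧
    binLoad w f b ≤ 2 * (∑ i, w i) / Fintype.card β
  have hbad :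
      univ.filter (fun f => ¬∀ b, good b f) ⊆ univ.biUnion fun b => univ.filter (¬good b ·) := by
    intro f hf
    obtain ⟨b, hb⟩ := not_forall.1 (mem_filter.1 hf).2
    exact mem_biUnion.2 ⟨b, mem_univ b, mem_filter.2 ⟨mem_univ f, hb⟩⟩
  have hunion : (#(univ.filter fun f => ¬∀ b, good b f) : ℝ) ≤
      Fintype.card β * (2 * (Fintype.card β ^ Fintype.card ι *
        exp (-((∑ i, w i) / (16 * Fintype.card β * c))))) :=
    calc _ ≤ ∑ b, (#(univ.filter (¬good b ·)) : ℝ) := by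
          exact_mod_cast (card_le_card hbad).trans card_biUnion_le
      _ ≤ ∑ _b : β, 2 * ((Fintype.card β : ℝ) ^ Fintype.card ι *
            exp (-((∑ i, w i) / (16 * Fintype.card β * c)))) :=
          sum_le_sum fun b _ => card_binLoad_not_bounded_le hw hwc hc b
      _ = _ := by rw [sum_const, card_univ, nsmul_eq_mul]
  have hcount : (#(univ.filter fun f => ∀ b, good b f) : ℝ) +
      #(univ.filter fun f => ¬∀ b, good b f) = (Fintype.card β : ℝ) ^ Fintype.card ι := by
    rw [← Nat.cast_add, card_filter_add_card_filter_not, card_univ, Fintype.card_fun]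
    push_cast
    rfl
  have hset : {f : ι → β | ∀ b, good b f} = ↑(univ.filter fun f => ∀ b, good b f) := by simp
  rw [hset, Set.ncard_coe_finset]
  linarith

end BinLoad

theorem two_mul_mul_exp_neg_le_rpow_neg {x : ℝ} (hx : 2 ≤ x) (a : ℝ) :
    2 * x * exp (-((a + 2) * log x)) ≤ x ^ (-a) := by
  have hx0 : 0 < x := by linarith
  calc 2 * x * exp (-((a + 2) * log x)) ≤ x * x * exp (-((a + 2) * log x)) := by gcongr
    _ = exp (log x) * exp (log x) * exp (-((a + 2) * log x)) := by rw [exp_log hx0]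
    _ = x ^ (-a) := by
        rw [← exp_add, ← exp_add, rpow_def_of_pos hx0]
        ring_nf

/-- **Weighted balls into bins, two-sided.**
For every real constant `a ≥ 1` there exists a constant `ε > 0` such that for every integer
`P ≥ 2`: if `w 1, …, w m` are nonnegative real weights with total `W = ∑ i, w i > 0` and
`w i ≤ ε·W/(P·ln P)` for every `i`, and each ball `i` is placed into one of `P` bins
independently and uniformly at random (modeled by the uniform distribution on the function
space `Fin m → Fin P`), then with probability at least `1 - P^(-a)`, every bin receives total
weight at least `W/(2P)` and at most `2W/P`. -/
theorem weighted_balls_into_bins_two_sided :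
    ∀ a : ℝ, 1 ≤ a →
      ∃ ε : ℝ, 0 < ε ∧
        ∀ (m P : ℕ), 2 ≤ P →
          ∀ w : Fin m → ℝ, (∀ i, 0 ≤ w i) →
            ∀ W : ℝ, W = ∑ i, w i → 0 < W →
              (∀ i, w i ≤ ε * W / (P * Real.log P)) →
              ((Set.ncard {f : Fin m → Fin P |
                  ∀ b : Fin P,
                    W / (2 * P) ≤ (∑ i ∈ Finset.univ.filter (fun i => f i = b), w i) ∧
                    (∑ i ∈ Finset.univ.filter (fun i => f i = b), w i) ≤ 2 * W / P} : ℝ)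
                / (P : ℝ) ^ m) ≥ 1 - (P : ℝ) ^ (-a) := by
  intro a ha
  have ha2 : 0 < a + 2 := by linarith
  refine ⟨1 / (16 * (a + 2)), by positivity, ?_⟩
  intro m P hP w hw W hW hWpos hwc
  have hP2 : (2 : ℝ) ≤ P := by exact_mod_cast hP
  have hlog : 0 < log P := log_pos (by linarith)
  have hc : 0 < 1 / (16 * (a + 2)) * W / (P * log P) := by positivity
  have hexponent : W / (16 * P * (1 / (16 * (a + 2)) * W / (P * log P))) = (a + 2) * log P := by
    field_simp
  have hgood := pow_mul_one_sub_le_ncard_binLoad_bounded (β := Fin P) hw hwc hc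
  simp only [Fintype.card_fin, ← hW, hexponent] at hgood
  rw [ge_iff_le, le_div_iff₀ (by positivity)]
  calc (1 - (P : ℝ) ^ (-a)) * P ^ m ≤ P ^ m * (1 - 2 * P * exp (-((a + 2) * log P))) := by
        nlinarith [two_mul_mul_exp_neg_le_rpow_neg hP2 a, pow_pos (by linarith : (0 : ℝ) < P) m]
    _ ≤ _ := hgood
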